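/- Jacobi triple product in terms of the normalized theta function: for 0 < p < 1 and nonzero complex z, (p; p)_∞ · θ(z) = ∑_{n=-∞}^{∞} (-1)^n p^{n(n-1)/2} z^n. -/

import Mathlib

/-- The infinite q-Pochhammer symbol `(a; p)_∞ = ∏_{i=0}^∞ (1 - a p^i)`. -/
noncomputable def poch (p a : ℂ) : ℂ := ∏' i : ℕ, (1 - a * p ^ i)

/-- The normalized theta function `θ(z) = (z; p)_∞ (p/z; p)_∞`. -/
noncomputable def theta (p z : ℂ) : ℂ := poch p z * poch p (p / z)

/-!
Cauchy's proof. Expanding `(z p^{-N}; p)_{2N}` by the finite `q`-binomial theorem and splitting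
the product at its middle gives the finite triple product
`(z; p)_N (p/z; p)_N = ∑_{|n| ≤ N} [2N, N+n]_p (-1)^n p^{n(n-1)/2} z^n`.
For `0 < p < 1` the Gaussian binomial `[2N, N+n]_p = (p;p)_{2N} / ((p;p)_{N+n} (p;p)_{N-n})`
tends to `1 / (p;p)_∞` and is bounded by `1 / (p;p)_∞²`, while `∑ p^{n(n-1)/2} |z|^n` converges,
so by Tannery's theorem `(p;p)_∞` times the finite identity tends to the claimed one.
-/

open Finset Filter Topology Real

section QBinomial

variable {R : Type*} [CommRing R]

/-- `(q; q)_m`, which differs from the `q`-factorial `[m]_q!` by the factor `(1 - q) ^ m`. -/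
def qFactorial (q : R) (m : ℕ) : R := ∏ k ∈ range m, (1 - q ^ (k + 1))

def qBinom (q : R) : ℕ → ℕ → R
  | _, 0 => 1
  | 0, _ + 1 => 0
  | m + 1, j + 1 => q ^ (j + 1) * qBinom q m (j + 1) + qBinom q m j

@[simp] lemma qBinom_zero_right (q : R) (m : ℕ) : qBinom q m 0 = 1 := by cases m <;> rfl

lemma qBinom_succ_succ (q : R) (m j : ℕ) :
    qBinom q (m + 1) (j + 1) = q ^ (j + 1) * qBinom q m (j + 1) + qBinom q m j := rfl

lemma qBinom_of_lt (q : R) {m j : ℕ} (h : m < j) : qBinom q m j = 0 := by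
  induction m generalizing j with
  | zero => obtain ⟨j, rfl⟩ := Nat.exists_eq_add_one.mpr h; rfl
  | succ m ih =>
    obtain ⟨j, rfl⟩ := Nat.exists_eq_add_one.mpr (Nat.zero_lt_of_lt h)
    rw [qBinom_succ_succ, ih (by omega), ih (by omega), mul_zero, add_zero]

@[simp] lemma qBinom_self (q : R) (m : ℕ) : qBinom q m m = 1 := by
  induction m with
  | zero => rfl
  | succ m ih =>
    rw [qBinom_succ_succ, qBinom_of_lt q (Nat.lt_succ_self m), ih, mul_zero, zero_add]

lemma map_qBinom {S : Type*} [CommRing S] (f : R →+* S) (q : R) (m j : ℕ) :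
    f (qBinom q m j) = qBinom (f q) m j := by
  induction m generalizing j with
  | zero => cases j <;> simp [qBinom]
  | succ m ih => cases j <;> simp [qBinom, ih]

lemma qFactorial_succ (q : R) (m : ℕ) :
    qFactorial q (m + 1) = qFactorial q m * (1 - q ^ (m + 1)) :=
  prod_range_succ _ m

lemma qBinom_mul_qFactorial_mul_qFactorial (q : R) {m j : ℕ} (h : j ≤ m) :
    qBinom q m j * qFactorial q j * qFactorial q (m - j) = qFactorial q m := by
  induction m generalizing j with
  | zero => obtain rfl := Nat.le_zero.mp h; simp [qFactorial]
  | succ m ih =>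
    rcases j with _ | j
    · simp [qFactorial]
    rcases (Nat.succ_le_succ_iff.mp h).eq_or_lt with rfl | hjm
    · simp [qFactorial]
    obtain ⟨d, rfl⟩ := Nat.exists_eq_add_of_lt hjm
    have ih₁ := ih (j := j + 1) (by omega)
    have ih₂ := ih (j := j) (by omega)
    rw [show j + d + 1 - (j + 1) = d by omega, qFactorial_succ q j] at ih₁
    rw [show j + d + 1 - j = d + 1 by omega, qFactorial_succ] at ih₂
    rw [show j + d + 1 + 1 - (j + 1) = d + 1 by omega, qBinom_succ_succ, qFactorial_succ,
      qFactorial_succ q d, qFactorial_succ q (j + d + 1)]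
    linear_combination (q ^ (j + 1) * (1 - q ^ (d + 1))) * ih₁ + (1 - q ^ (j + 1)) * ih₂

theorem prod_one_sub_mul_pow_eq_sum_qBinom (q z : R) (m : ℕ) :
    ∏ k ∈ range m, (1 - z * q ^ k) =
      ∑ j ∈ range (m + 1), qBinom q m j * ((-1) ^ j * q ^ j.choose 2 * z ^ j) := by
  induction m generalizing z with
  | zero => simp
  | succ m ih =>
    set b : ℕ → R := fun j => qBinom q m j * ((-1) ^ j * q ^ j.choose 2 * (z * q) ^ j) with hb
    have hb_last : b (m + 1) = 0 := by simp [hb, qBinom_of_lt q (Nat.lt_succ_self m)]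
    have hchoose (j : ℕ) : (j + 1).choose 2 = j.choose 2 + j := by
      rw [Nat.choose_succ_succ, Nat.choose_one_right, add_comm]
    calc ∏ k ∈ range (m + 1), (1 - z * q ^ k)
        = (∏ k ∈ range m, (1 - z * q * q ^ k)) * (1 - z) := by
          rw [prod_range_succ']; simp [pow_succ', mul_assoc]
      _ = (∑ j ∈ range (m + 1), b j) * (1 - z) := by rw [ih]
      _ = ∑ j ∈ range (m + 2), b j - z * ∑ j ∈ range (m + 1), b j := by
          rw [sum_range_succ _ (m + 1), hb_last]; ring
      _ = _ := by
          rw [sum_range_succ' b, sum_range_succ' _ (m + 1), mul_sum, ← sub_add_eq_add_sub,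
            ← sum_sub_distrib]
          congr 1
          · refine sum_congr rfl fun j _ => ?_
            simp only [hb, qBinom_succ_succ, hchoose, pow_add, mul_pow]
            ring
          · simp [hb]

end QBinomial

lemma two_mul_mul_sub_one_ediv_two (n : ℤ) : 2 * (n * (n - 1) / 2) = n * (n - 1) :=
  Int.mul_ediv_cancel' (Int.even_mul_pred_self n).two_dvd

lemma add_mul_add_sub_one_ediv_two (m n : ℤ) :
    (m + n) * (m + n - 1) / 2 = m * (m - 1) / 2 + n * (n - 1) / 2 + m * n := by
  refine mul_left_cancel₀ (two_ne_zero (α := ℤ)) ?_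
  rw [mul_add, mul_add, two_mul_mul_sub_one_ediv_two, two_mul_mul_sub_one_ediv_two,
    two_mul_mul_sub_one_ediv_two]
  ring

section Field

variable {K : Type*} [Field K] {q z : K}

variable (q z) in
def jacobiTerm (n : ℤ) : K := (-1) ^ n * q ^ (n * (n - 1) / 2) * z ^ n

variable (q z) in
lemma jacobiTerm_natCast (j : ℕ) : jacobiTerm q z j = (-1) ^ j * q ^ j.choose 2 * z ^ j := by
  have h : (j : ℤ) * (j - 1) / 2 = (j.choose 2 : ℕ) := by
    rcases j with _ | j <;> simp [Nat.choose_two_right]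
  simp only [jacobiTerm, h, zpow_natCast]

lemma jacobiTerm_add (hq : q ≠ 0) (hz : z ≠ 0) (m n : ℤ) :
    jacobiTerm q z (m + n) = jacobiTerm q z m * jacobiTerm q z n * q ^ (m * n) := by
  simp only [jacobiTerm, add_mul_add_sub_one_ediv_two, zpow_add₀ hq, zpow_add₀ hz,
    zpow_add₀ (by norm_num : (-1 : K) ≠ 0)]
  ring

variable (q z) in
lemma jacobiTerm_mul_zpow (m n : ℤ) :
    jacobiTerm q (z * q ^ m) n = jacobiTerm q z n * q ^ (m * n) := by
  simp only [jacobiTerm, mul_zpow, ← zpow_mul]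
  ring

lemma prod_one_sub_div_mul_pow_eq_jacobiTerm_neg_mul (hq : q ≠ 0) (hz : z ≠ 0) (N : ℕ) :
    ∏ k ∈ range N, (1 - q / z * q ^ k) =
      jacobiTerm q z (-N) * ∏ k ∈ range N, (1 - z * q ^ (-(k + 1 : ℤ))) := by
  induction N with
  | zero => simp [jacobiTerm]
  | succ N ih =>
    have h₁ : jacobiTerm q z (-1) = -(q / z) := by simp [jacobiTerm, div_eq_mul_inv]
    have h₂ : 1 - q / z * q ^ N = -(q / z) * q ^ N * (1 - z * q ^ (-(N + 1 : ℤ))) := by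
      rw [zpow_neg, ← Nat.cast_succ, zpow_natCast, pow_succ]
      field_simp
      ring
    rw [prod_range_succ, prod_range_succ, ih, h₂, Nat.cast_succ, neg_add, jacobiTerm_add hq hz,
      h₁, neg_mul_neg, mul_one, zpow_natCast]
    ring

theorem prod_mul_prod_eq_sum_qBinom_mul_jacobiTerm (hq : q ≠ 0) (hz : z ≠ 0) (N : ℕ) :
    (∏ k ∈ range N, (1 - z * q ^ k)) * ∏ k ∈ range N, (1 - q / z * q ^ k) =
      ∑ n ∈ Icc (-N : ℤ) N, qBinom q (2 * N) (N + n).toNat * jacobiTerm q z n := by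
  -- expand `(z q^{-N}; q)_{2N}`: its upper half is `(z; q)_N`, its lower half is `(q/z; q)_N`
  -- up to the factor `jacobiTerm q z (-N)`
  have hsplit : ∏ k ∈ range (2 * N), (1 - z * q ^ (-N : ℤ) * q ^ k) =
      (∏ k ∈ range N, (1 - z * q ^ (-(k + 1 : ℤ)))) * ∏ k ∈ range N, (1 - z * q ^ k) := by
    rw [two_mul, prod_range_add, ← prod_range_reflect _ N]
    congr 1 <;> refine prod_congr rfl fun k hk => ?_
    · rw [mul_assoc, ← zpow_natCast, ← zpow_add₀ hq]
      congr 3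
      simp only [mem_range] at hk
      omega
    · rw [mul_assoc, ← zpow_natCast, ← zpow_add₀ hq, ← zpow_natCast]
      congr 3
      push_cast
      ring
  have hterm (j : ℕ) :
      jacobiTerm q z (-N) * ((-1) ^ j * q ^ j.choose 2 * (z * q ^ (-N : ℤ)) ^ j) =
        jacobiTerm q z (-N + j) := by
    rw [jacobiTerm_add hq hz, ← jacobiTerm_natCast, jacobiTerm_mul_zpow, mul_assoc]
  calc (∏ k ∈ range N, (1 - z * q ^ k)) * ∏ k ∈ range N, (1 - q / z * q ^ k)
      = jacobiTerm q z (-N) * ∏ k ∈ range (2 * N), (1 - z * q ^ (-N : ℤ) * q ^ k) := by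
        rw [hsplit, prod_one_sub_div_mul_pow_eq_jacobiTerm_neg_mul hq hz]; ring
    _ = ∑ j ∈ range (2 * N + 1), qBinom q (2 * N) j * jacobiTerm q z (-N + j) := by
        rw [prod_one_sub_mul_pow_eq_sum_qBinom, mul_sum]
        exact sum_congr rfl fun j _ => by rw [← hterm]; ring
    _ = _ := by
        refine sum_nbij' (fun j => -N + j) (fun n => (N + n).toNat) ?_ ?_ ?_ ?_ ?_ <;>
          intro a ha <;> simp only [mem_range, mem_Icc] at ha ⊢
        any_goals omega
        rw [show ((N : ℤ) + (-N + a)).toNat = a by omega]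

end Field

lemma summable_zpow_mul_sub_one_ediv_two_mul_zpow {r c : ℝ} (hr0 : 0 < r) (hr1 : r < 1)
    (hc : 0 < c) : Summable fun n : ℤ => r ^ (n * (n - 1) / 2) * c ^ n := by
  have hlog : Real.log r < 0 := Real.log_neg hr0 hr1
  -- `T` and `S` make the theta-series majorant `exp (-π (T n² - 2 S |n|))` dominate
  -- `r ^ (n(n-1)/2) * c ^ n = exp (log r * n(n-1)/2 + n log c)`
  set T := -Real.log r / (2 * π)
  set S := (|Real.log c| - Real.log r / 2) / (2 * π)
  have hT : 0 < T := div_pos (neg_pos.mpr hlog) (by positivity)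
  refine (summable_pow_mul_jacobiTheta₂_term_bound S hT 0).of_nonneg_of_le
    (fun n => by positivity) fun n => ?_
  have he : ((n * (n - 1) / 2 : ℤ) : ℝ) = n * (n - 1) / 2 := by
    rw [eq_div_iff two_ne_zero, mul_comm]
    exact_mod_cast two_mul_mul_sub_one_ediv_two n
  have hbound : -π * (T * n ^ 2 - 2 * S * |(n : ℝ)|) =
      Real.log r * n ^ 2 / 2 + (|Real.log c| - Real.log r / 2) * |(n : ℝ)| := by
    simp only [T, S]
    field_simp
    ring
  have h₁ : n * Real.log c ≤ |(n : ℝ)| * |Real.log c| := by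
    rw [← abs_mul]; exact le_abs_self _
  have h₂ : -Real.log r * n ≤ -Real.log r * |(n : ℝ)| :=
    mul_le_mul_of_nonneg_left (le_abs_self _) (by linarith)
  rw [pow_zero, one_mul, Int.cast_abs, hbound, ← Real.rpow_intCast, ← Real.rpow_intCast,
    Real.rpow_def_of_pos hr0, Real.rpow_def_of_pos hc, ← Real.exp_add, he]
  refine Real.exp_le_exp.mpr ?_
  linarith

lemma summable_norm_jacobiTerm {K : Type*} [NormedField K] {q z : K} (hq0 : q ≠ 0)
    (hq1 : ‖q‖ < 1) (hz : z ≠ 0) : Summable fun n : ℤ => ‖jacobiTerm q z n‖ := by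
  simpa [jacobiTerm, norm_zpow] using summable_zpow_mul_sub_one_ediv_two_mul_zpow
    (norm_pos_iff.mpr hq0) hq1 (norm_pos_iff.mpr hz)

lemma tendsto_prod_range_poch {q : ℂ} (hq : ‖q‖ < 1) (a : ℂ) :
    Tendsto (fun N => ∏ k ∈ range N, (1 - a * q ^ k)) atTop (𝓝 (poch q a)) := by
  have hs : Summable fun k : ℕ => -(a * q ^ k) :=
    ((summable_geometric_of_norm_lt_one hq).mul_left a).neg
  simpa only [poch, sub_eq_add_neg] using
    (Complex.multipliable_one_add_of_summable hs).hasProd.tendsto_prod_nat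

section Real

variable {p : ℝ}

lemma one_sub_pow_succ_pos (hp0 : 0 ≤ p) (hp1 : p < 1) (k : ℕ) : 0 < 1 - p ^ (k + 1) :=
  sub_pos.mpr (pow_lt_one₀ hp0 hp1 k.succ_ne_zero)

lemma qFactorial_pos (hp0 : 0 ≤ p) (hp1 : p < 1) (m : ℕ) : 0 < qFactorial p m :=
  prod_pos fun k _ => one_sub_pow_succ_pos hp0 hp1 k

lemma qFactorial_le_one (hp0 : 0 ≤ p) (hp1 : p < 1) (m : ℕ) : qFactorial p m ≤ 1 :=
  prod_le_one (fun k _ => (one_sub_pow_succ_pos hp0 hp1 k).le)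
    fun _ _ => sub_le_self _ (pow_nonneg hp0 _)

lemma qFactorial_antitone (hp0 : 0 ≤ p) (hp1 : p < 1) : Antitone (qFactorial p) :=
  antitone_nat_of_succ_le fun m => by
    rw [qFactorial_succ]
    exact mul_le_of_le_one_right (qFactorial_pos hp0 hp1 m).le (sub_le_self _ (pow_nonneg hp0 _))

lemma summable_neg_pow_succ (hp0 : 0 ≤ p) (hp1 : p < 1) :
    Summable fun k : ℕ => -p ^ (k + 1) := by
  simpa only [pow_succ'] using ((summable_geometric_of_lt_one hp0 hp1).mul_left p).neg

lemma tendsto_qFactorial (hp0 : 0 ≤ p) (hp1 : p < 1) :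
    Tendsto (qFactorial p) atTop (𝓝 (∏' k : ℕ, (1 - p ^ (k + 1)))) := by
  have := (Real.multipliable_one_add_of_summable (summable_neg_pow_succ hp0 hp1)).hasProd
  simp only [← sub_eq_add_neg] at this
  exact this.tendsto_prod_nat

lemma tprod_one_sub_pow_succ_pos (hp0 : 0 ≤ p) (hp1 : p < 1) :
    0 < ∏' k : ℕ, (1 - p ^ (k + 1)) := by
  have hlog : Summable fun k : ℕ => Real.log (1 - p ^ (k + 1)) := by
    simpa only [sub_eq_add_neg] using
      Real.summable_log_one_add_of_summable (summable_neg_pow_succ hp0 hp1)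
  rw [← Real.rexp_tsum_eq_tprod (one_sub_pow_succ_pos hp0 hp1) hlog]
  exact Real.exp_pos _

lemma tprod_one_sub_pow_succ_le_qFactorial (hp0 : 0 ≤ p) (hp1 : p < 1) (m : ℕ) :
    ∏' k : ℕ, (1 - p ^ (k + 1)) ≤ qFactorial p m :=
  (qFactorial_antitone hp0 hp1).le_of_tendsto (tendsto_qFactorial hp0 hp1) m

lemma poch_ofReal_self (hp0 : 0 ≤ p) (hp1 : p < 1) :
    poch (p : ℂ) p = ((∏' k : ℕ, (1 - p ^ (k + 1)) : ℝ) : ℂ) := by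
  refine tendsto_nhds_unique (tendsto_prod_range_poch (by simpa [abs_of_nonneg hp0]) _) ?_
  refine ((Complex.continuous_ofReal.tendsto _).comp (tendsto_qFactorial hp0 hp1)).congr fun N => ?_
  simp [qFactorial, pow_succ']

lemma qBinom_nonneg (hp0 : 0 ≤ p) (m j : ℕ) : 0 ≤ qBinom p m j := by
  induction m generalizing j with
  | zero => cases j <;> simp [qBinom]
  | succ m ih =>
    cases j with
    | zero => simp
    | succ j => exact add_nonneg (mul_nonneg (pow_nonneg hp0 _) (ih _)) (ih _)

lemma qBinom_eq_div (hp0 : 0 ≤ p) (hp1 : p < 1) {m j : ℕ} (h : j ≤ m) :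
    qBinom p m j = qFactorial p m / (qFactorial p j * qFactorial p (m - j)) := by
  rw [eq_div_iff (mul_pos (qFactorial_pos hp0 hp1 _) (qFactorial_pos hp0 hp1 _)).ne', ← mul_assoc,
    qBinom_mul_qFactorial_mul_qFactorial p h]

lemma qBinom_le_inv_tprod_sq (hp0 : 0 ≤ p) (hp1 : p < 1) (m j : ℕ) :
    qBinom p m j ≤ ((∏' k : ℕ, (1 - p ^ (k + 1))) ^ 2)⁻¹ := by
  have hL := tprod_one_sub_pow_succ_pos hp0 hp1
  have hL_le := tprod_one_sub_pow_succ_le_qFactorial hp0 hp1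
  rcases le_or_gt j m with h | h
  · rw [qBinom_eq_div hp0 hp1 h, ← one_div, sq]
    exact div_le_div₀ zero_le_one (qFactorial_le_one hp0 hp1 m) (mul_pos hL hL)
      (mul_le_mul (hL_le j) (hL_le _) hL.le (qFactorial_pos hp0 hp1 j).le)
  · rw [qBinom_of_lt p h]
    positivity

lemma tendsto_qBinom_two_mul (hp0 : 0 ≤ p) (hp1 : p < 1) (n : ℤ) :
    Tendsto (fun N : ℕ => qBinom p (2 * N) (N + n).toNat) atTop
      (𝓝 (∏' k : ℕ, (1 - p ^ (k + 1)))⁻¹) := by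
  set L := ∏' k : ℕ, (1 - p ^ (k + 1))
  have hL := tprod_one_sub_pow_succ_pos hp0 hp1
  have hlim {u : ℕ → ℕ} (hu : ∀ N, N - n.natAbs ≤ u N) :
      Tendsto (qFactorial p ∘ u) atTop (𝓝 L) :=
    (tendsto_qFactorial hp0 hp1).comp <| tendsto_atTop_atTop.mpr fun b =>
      ⟨b + n.natAbs, fun N hN => (hu N).trans' (by omega)⟩
  have key := (hlim (u := fun N => 2 * N) (by omega)).div
    ((hlim (u := fun N => (N + n).toNat) (by omega)).mul
      (hlim (u := fun N => 2 * N - (N + n).toNat) (by omega))) (mul_pos hL hL).ne'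
  rw [show L / (L * L) = L⁻¹ by field_simp] at key
  refine key.congr' ?_
  filter_upwards [eventually_ge_atTop n.natAbs] with N hN
  rw [qBinom_eq_div hp0 hp1 (by omega)]
  rfl

lemma tendsto_sum_Icc_qBinom_mul_jacobiTerm (hp0 : 0 < p) (hp1 : p < 1) {z : ℂ} (hz : z ≠ 0) :
    Tendsto (fun N : ℕ => ∑ n ∈ Icc (-N : ℤ) N,
        (((∏' k : ℕ, (1 - p ^ (k + 1))) * qBinom p (2 * N) (N + n).toNat : ℝ) : ℂ) *
          jacobiTerm (p : ℂ) z n)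
      atTop (𝓝 (∑' n : ℤ, jacobiTerm (p : ℂ) z n)) := by
  set L := ∏' k : ℕ, (1 - p ^ (k + 1))
  have hL : 0 < L := tprod_one_sub_pow_succ_pos hp0.le hp1
  have hpC : (p : ℂ) ≠ 0 := Complex.ofReal_ne_zero.mpr hp0.ne'
  have hpC1 : ‖(p : ℂ)‖ < 1 := by simpa [abs_of_pos hp0]
  refine Tendsto.congr (fun N => (sum_eq_tsum_indicator _ _).symm) ?_
  refine tendsto_tsum_of_dominated_convergence
    ((summable_norm_jacobiTerm hpC hpC1 hz).mul_left L⁻¹) (fun n => ?_)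
    (Eventually.of_forall fun N n => (norm_indicator_le_norm_self _ _).trans ?_)
  · have h := ((Complex.continuous_ofReal.tendsto _).comp
      ((tendsto_qBinom_two_mul hp0.le hp1 n).const_mul L)).mul_const (jacobiTerm (p : ℂ) z n)
    rw [mul_inv_cancel₀ hL.ne', Complex.ofReal_one, one_mul] at h
    refine h.congr' ?_
    filter_upwards [eventually_ge_atTop n.natAbs] with N hN
    rw [Set.indicator_of_mem (by simp only [coe_Icc, Set.mem_Icc]; omega)]
    rfl
  · rw [norm_mul, Complex.norm_real,
      Real.norm_of_nonneg (mul_nonneg hL.le (qBinom_nonneg hp0.le _ _))]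
    gcongr
    calc L * qBinom p (2 * N) (N + n).toNat ≤ L * (L ^ 2)⁻¹ :=
          mul_le_mul_of_nonneg_left (qBinom_le_inv_tprod_sq hp0.le hp1 _ _) hL.le
      _ = L⁻¹ := by field_simp

end Real

/-- Jacobi triple product: `(p;p)_∞ θ(z) = ∑_{n ∈ ℤ} (-1)^n p^{n(n-1)/2} z^n`. -/
theorem jacobi_triple_product (p : ℝ) (hp0 : 0 < p) (hp1 : p < 1)
    (z : ℂ) (hz : z ≠ 0) :
    poch (p : ℂ) (p : ℂ) * theta (p : ℂ) z =
      ∑' n : ℤ, (-1 : ℂ) ^ n * (p : ℂ) ^ (n * (n - 1) / 2) * z ^ n := by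
  have hpC : (p : ℂ) ≠ 0 := Complex.ofReal_ne_zero.mpr hp0.ne'
  have hpC1 : ‖(p : ℂ)‖ < 1 := by simpa [abs_of_pos hp0]
  refine tendsto_nhds_unique ?_ (tendsto_sum_Icc_qBinom_mul_jacobiTerm hp0 hp1 hz)
  set L := ∏' k : ℕ, (1 - p ^ (k + 1))
  have hfinite (N : ℕ) : ∑ n ∈ Icc (-N : ℤ) N,
      ((L * qBinom p (2 * N) (N + n).toNat : ℝ) : ℂ) * jacobiTerm (p : ℂ) z n =
        L * ((∏ k ∈ range N, (1 - z * (p : ℂ) ^ k)) *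
          ∏ k ∈ range N, (1 - p / z * (p : ℂ) ^ k)) := by
    rw [prod_mul_prod_eq_sum_qBinom_mul_jacobiTerm hpC hz, mul_sum]
    refine sum_congr rfl fun n _ => ?_
    rw [Complex.ofReal_mul, ← Complex.ofRealHom_eq_coe (qBinom _ _ _), map_qBinom]
    simp only [Complex.ofRealHom_eq_coe]
    ring
  simp_rw [hfinite, poch_ofReal_self hp0.le hp1, theta]
  exact ((tendsto_prod_range_poch hpC1 z).mul (tendsto_prod_range_poch hpC1 _)).const_mul _
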